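/- arXiv:1307.6741 — 4 statements merged into one kernel-verified Lean document; each statement's English description precedes it below -/
import Mathlib

section
/- Let A be a closed symmetric relation in 𝔥 and Π₋ = {𝓗₀ ⊕ 𝓗₁, Γ₀, Γ₁} a boundary triplet for A*, where 𝓗₁ ⊆ 𝓗₀, Γⱼ : A* → 𝓗ⱼ, the map Γ = (Γ₀, Γ₁) : A* → 𝓗₀ ⊕ 𝓗₁ is surjective, and the Green's identity ⟨f',g⟩ − ⟨f,g'⟩ = ⟨Γ₁f̂, Γ₀ĝ⟩ − ⟨Γ₀f̂, Γ₁ĝ⟩ − i⟨P₂Γ₀f̂, P₂Γ₀ĝ⟩ holds for all f̂ = (f,f'), ĝ = (g,g') ∈ A*, with P₂ the projection onto 𝓗₂ = 𝓗₀ ⊖ 𝓗₁. Then ker Γ₀ ∩ ker Γ₁ = A. -/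
/- STATEMENT 6: for a boundary triplet `Π₋ = {𝓗₀ ⊕ 𝓗₁, Γ₀, Γ₁}` for `A*`,
one has `ker Γ₀ ∩ ker Γ₁ = A`.
(The inner product `⟪·,·⟫` is conjugate-linear in the first argument; the paper's
pairing `(x,y)` corresponds to `⟪y,x⟫` and the Green identity is stated accordingly.) -/

open scoped ComplexInnerProductSpace

set_option synthInstance.maxHeartbeats 1000000

/-- The adjoint of a linear relation `T` in `𝔥`. -/
def adjRel {𝔥 : Type*} [NormedAddCommGroup 𝔥] [InnerProductSpace ℂ 𝔥]
    (T : Submodule ℂ (𝔥 × 𝔥)) : Submodule ℂ (𝔥 × 𝔥) where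
  carrier := {p | ∀ q ∈ T, ⟪p.2, q.1⟫ = ⟪p.1, q.2⟫}
  add_mem' := by
    intro a b ha hb q hq
    show ⟪a.2 + b.2, q.1⟫ = ⟪a.1 + b.1, q.2⟫
    rw [inner_add_left, inner_add_left, ha q hq, hb q hq]
  zero_mem' := by
    intro q hq
    show ⟪(0 : 𝔥), q.1⟫ = ⟪(0 : 𝔥), q.2⟫
    simp
  smul_mem' := by
    intro c a ha q hq
    show ⟪c • a.2, q.1⟫ = ⟪c • a.1, q.2⟫
    rw [inner_smul_left, inner_smul_left, ha q hq]

variable {𝔥 𝓗₀ : Type*} [NormedAddCommGroup 𝔥] [InnerProductSpace ℂ 𝔥] [CompleteSpace 𝔥]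
  [NormedAddCommGroup 𝓗₀] [InnerProductSpace ℂ 𝓗₀] [CompleteSpace 𝓗₀]


/-! If `Γ₀ f = Γ₁ f = 0`, the Green identity says `⟪f', g⟫ = ⟪f, g'⟫` for all `(g, g') ∈ A*`, so
`f ∈ A** = A`. The inclusion `A** ⊆ A` holds because in the `L²` product `A*` is the image of
`Aᗮ` under the rotation `(u, v) ↦ (-v, u)`, hence `A** ⊆ Aᗮᗮ = A` for closed `A`.

Conversely, for `f ∈ A` the left side of the Green identity vanishes for every `g ∈ A*`, so by
surjectivity of `Γ` the boundary form pairs `(Γ₀ f, Γ₁ f)` to zero with all of `𝓗₀ × 𝓗₁`.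
Testing against `(0, y)`, `(Γ₁ f, 0)` and `(Γ₀ f, 0)` shows successively `Γ₀ f ∈ 𝓗₁ᗮ`,
`Γ₁ f = 0` and `Γ₀ f = 0`. -/

theorem adjRel_adjRel_le {A : Submodule ℂ (𝔥 × 𝔥)} (hA : IsClosed (A : Set (𝔥 × 𝔥))) :
    adjRel (adjRel A) ≤ A := by
  intro f hf
  let e := WithLp.prodContinuousLinearEquiv 2 ℂ 𝔥 𝔥
  let A' : Submodule ℂ (WithLp 2 (𝔥 × 𝔥)) := A.comap (e : WithLp 2 (𝔥 × 𝔥) →ₗ[ℂ] 𝔥 × 𝔥)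
  have : CompleteSpace A' := (hA.preimage e.continuous).completeSpace_coe
  have hrot : ∀ v ∈ A'ᗮ, (-v.ofLp.2, v.ofLp.1) ∈ adjRel A := by
    intro v hv q hq
    have hvq : ⟪v, WithLp.toLp 2 q⟫ = 0 :=
      Submodule.inner_left_of_mem_orthogonal (by simpa [A', e] using hq) hv
    simp only [WithLp.prod_inner_apply] at hvq
    show ⟪v.ofLp.1, q.1⟫ = ⟪-v.ofLp.2, q.2⟫
    rw [inner_neg_left]
    linear_combination hvq
  have hf' : WithLp.toLp 2 f ∈ A'ᗮᗮ := by
    rw [Submodule.mem_orthogonal']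
    intro v hv
    have hfv := hf _ (hrot v hv)
    simp only [inner_neg_right] at hfv
    simp only [WithLp.prod_inner_apply]
    linear_combination -hfv
  rw [A'.orthogonal_orthogonal] at hf'
  simpa [A', e] using hf'

section BoundaryForm

variable {E : Type*} [NormedAddCommGroup E] [InnerProductSpace ℂ E]

/-- The right-hand side of the Green identity, `Kᗮ.orthogonalProjectionOnto` being the paper's
`P₂`. -/
noncomputable def boundaryForm (K : Submodule ℂ E) [Kᗮ.HasOrthogonalProjection]
    (x : E) (y : K) (a : E) (b : K) : ℂ :=
  ⟪x, (b : E)⟫ - ⟪(y : E), a⟫ -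
    Complex.I * ⟪(Kᗮ.orthogonalProjectionOnto x : E), (Kᗮ.orthogonalProjectionOnto a : E)⟫

theorem eq_zero_of_forall_boundaryForm_eq_zero {K : Submodule ℂ E} [Kᗮ.HasOrthogonalProjection]
    {a : E} {b : K} (h : ∀ x y, boundaryForm K x y a b = 0) : a = 0 ∧ b = 0 := by
  have ha : a ∈ Kᗮ := by
    rw [Submodule.mem_orthogonal]
    intro y hy
    simpa [boundaryForm] using h 0 ⟨y, hy⟩
  have hb : b = 0 := by
    have hPb : Kᗮ.orthogonalProjectionOnto (b : E) = 0 :=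
      Submodule.orthogonalProjectionOnto_apply_of_mem_orthogonal (K.le_orthogonal_orthogonal b.2)
    simpa [boundaryForm, hPb] using h b 0
  refine ⟨?_, hb⟩
  have hPa : (Kᗮ.orthogonalProjectionOnto a : E) = a := Submodule.starProjection_eq_self_iff.mpr ha
  simpa [boundaryForm, hb, hPa, Complex.I_ne_zero] using h a 0

end BoundaryForm

theorem statement6_general
    (A : Submodule ℂ (𝔥 × 𝔥)) (hA : IsClosed (A : Set (𝔥 × 𝔥)))
    (𝓗₁ : Submodule ℂ 𝓗₀)
    (Γ₀ : ↥(adjRel A) →ₗ[ℂ] 𝓗₀) (Γ₁ : ↥(adjRel A) →ₗ[ℂ] ↥𝓗₁)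
    (hsurj : Function.Surjective (fun f : ↥(adjRel A) => (Γ₀ f, Γ₁ f)))
    (hGreen : ∀ f g : ↥(adjRel A),
      ⟪(g : 𝔥 × 𝔥).1, (f : 𝔥 × 𝔥).2⟫ - ⟪(g : 𝔥 × 𝔥).2, (f : 𝔥 × 𝔥).1⟫ =
        ⟪Γ₀ g, (Γ₁ f : 𝓗₀)⟫ - ⟪(Γ₁ g : 𝓗₀), Γ₀ f⟫ -
          Complex.I * ⟪((Submodule.orthogonalProjectionOnto (𝓗₁ᗮ) (Γ₀ g) : ↥(𝓗₁ᗮ)) : 𝓗₀),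
            ((Submodule.orthogonalProjectionOnto (𝓗₁ᗮ) (Γ₀ f) : ↥(𝓗₁ᗮ)) : 𝓗₀)⟫) :
    ∀ f : ↥(adjRel A), (Γ₀ f = 0 ∧ Γ₁ f = 0) ↔ (f : 𝔥 × 𝔥) ∈ A := by
  intro f
  constructor
  · rintro ⟨h0, h1⟩
    refine adjRel_adjRel_le hA fun g hg => ?_
    have hfg := hGreen f ⟨g, hg⟩
    simp only [h0, h1, ZeroMemClass.coe_zero, map_zero, inner_zero_right,
      sub_zero, mul_zero] at hfg
    rw [← inner_conj_symm f.1.2, ← inner_conj_symm f.1.1, sub_eq_zero.mp hfg]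
  · intro hf
    refine eq_zero_of_forall_boundaryForm_eq_zero fun x y => ?_
    obtain ⟨g, hg⟩ := hsurj (x, y)
    obtain ⟨rfl, rfl⟩ := Prod.mk.inj hg
    rw [boundaryForm, ← hGreen, g.2 _ hf, sub_self]

theorem statement6
    (A : Submodule ℂ (𝔥 × 𝔥)) (hA : IsClosed (A : Set (𝔥 × 𝔥))) (hsym : A ≤ adjRel A)
    (𝓗₁ : Submodule ℂ 𝓗₀) (hcl : IsClosed (𝓗₁ : Set 𝓗₀))
    (Γ₀ : ↥(adjRel A) →ₗ[ℂ] 𝓗₀) (Γ₁ : ↥(adjRel A) →ₗ[ℂ] ↥𝓗₁)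
    (hsurj : Function.Surjective (fun f : ↥(adjRel A) => (Γ₀ f, Γ₁ f)))
    (hGreen : ∀ f g : ↥(adjRel A),
      ⟪(g : 𝔥 × 𝔥).1, (f : 𝔥 × 𝔥).2⟫ - ⟪(g : 𝔥 × 𝔥).2, (f : 𝔥 × 𝔥).1⟫ =
        ⟪Γ₀ g, (Γ₁ f : 𝓗₀)⟫ - ⟪(Γ₁ g : 𝓗₀), Γ₀ f⟫ -
          Complex.I * ⟪((Submodule.orthogonalProjectionOnto (𝓗₁ᗮ) (Γ₀ g) : ↥(𝓗₁ᗮ)) : 𝓗₀),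
            ((Submodule.orthogonalProjectionOnto (𝓗₁ᗮ) (Γ₀ f) : ↥(𝓗₁ᗮ)) : 𝓗₀)⟫) :
    ∀ f : ↥(adjRel A), (Γ₀ f = 0 ∧ Γ₁ f = 0) ↔ (f : 𝔥 × 𝔥) ∈ A :=
  statement6_general A hA 𝓗₁ Γ₀ Γ₁ hsurj hGreen
end

section
/- Under the boundary triplet Π₋ = {𝓗₀ ⊕ 𝓗₁, Γ₀, Γ₁} for A* as above, the relation A₀ := ker Γ₀ = {f̂ ∈ A* : Γ₀ f̂ = 0} is a closed symmetric extension of A, and every λ in the open lower half-plane ℂ₋ belongs to the resolvent set of A₀. -/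
/-!
Green's identity with `Γ₀ f̂ = Γ₀ ĝ = 0` makes `A₀` symmetric; with `Γ₀ ĝ = 0` and `Γ₁ ĝ` arbitrary it
shows `A* ∩ A₀* = {f̂ : Γ₀ f̂ ⊥ 𝓗₁}`, on which it reads `2 Im ⟨f, f'⟩ = -‖Γ₀ f̂‖²`. Hence
`A₀ = A* ∩ A₀* ∩ {Im ⟨f, f'⟩ = 0}` is closed and contains `A`, and `A₀*` has no eigenvalue in the upper
half-plane. For `Im λ < 0`, symmetry gives `|Im λ| ‖f‖ ≤ ‖f' - λ f‖` on `A₀`, so `ran (A₀ - λ)` is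
closed; it is dense since `λ̄` is not an eigenvalue of `A₀*`, and `(A₀ - λ)⁻¹` is bounded by the open
mapping theorem.
-/

open scoped ComplexInnerProductSpace

set_option synthInstance.maxHeartbeats 1000000

section LinearRelation

variable {𝔥 : Type*} [NormedAddCommGroup 𝔥] [InnerProductSpace ℂ 𝔥]

lemma isClosed_adjRel (T : Submodule ℂ (𝔥 × 𝔥)) : IsClosed (adjRel T : Set (𝔥 × 𝔥)) := by
  show IsClosed {p : 𝔥 × 𝔥 | ∀ q ∈ T, ⟪p.2, q.1⟫ = ⟪p.1, q.2⟫}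
  simp only [Set.ofPred_forall]
  exact isClosed_biInter fun q _ =>
    isClosed_eq (continuous_snd.inner continuous_const) (continuous_fst.inner continuous_const)

lemma adjRel_anti {T U : Submodule ℂ (𝔥 × 𝔥)} (h : T ≤ U) : adjRel U ≤ adjRel T :=
  fun _ hp q hq => hp q (h hq)

lemma le_adjRel_adjRel (T : Submodule ℂ (𝔥 × 𝔥)) : T ≤ adjRel (adjRel T) := fun p hp q hq => by
  simpa only [inner_conj_symm] using (congrArg (starRingEnd ℂ) (hq p hp)).symm

lemma im_inner_eq_zero_of_le_adjRel {S : Submodule ℂ (𝔥 × 𝔥)} (hS : S ≤ adjRel S)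
    {p : 𝔥 × 𝔥} (hp : p ∈ S) : (⟪p.1, p.2⟫).im = 0 :=
  Complex.conj_eq_iff_im.mp <| (inner_conj_symm _ _).trans (hS hp p hp)

lemma abs_im_mul_norm_le_of_le_adjRel {S : Submodule ℂ (𝔥 × 𝔥)} (hS : S ≤ adjRel S) (l : ℂ)
    {p : 𝔥 × 𝔥} (hp : p ∈ S) : |l.im| * ‖p.1‖ ≤ ‖p.2 - l • p.1‖ := by
  have him : (⟪p.1, p.2 - l • p.1⟫).im = -(l.im * ‖p.1‖ ^ 2) := by
    rw [inner_sub_right, inner_smul_right, inner_self_eq_norm_sq_to_K, Complex.sub_im,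
      im_inner_eq_zero_of_le_adjRel hS hp]
    norm_cast
    simp [Complex.mul_im, -Complex.ofReal_pow]
  have hsq : |l.im| * ‖p.1‖ * ‖p.1‖ ≤ ‖p.2 - l • p.1‖ * ‖p.1‖ :=
    calc |l.im| * ‖p.1‖ * ‖p.1‖ = |(⟪p.1, p.2 - l • p.1⟫).im| := by
          rw [him, abs_neg, abs_mul, abs_of_nonneg (sq_nonneg ‖p.1‖)]; ring
      _ ≤ ‖⟪p.1, p.2 - l • p.1⟫‖ := Complex.abs_im_le_norm _
      _ ≤ ‖p.2 - l • p.1‖ * ‖p.1‖ := by rw [mul_comm]; exact norm_inner_le_norm _ _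
  rcases (norm_nonneg p.1).eq_or_lt with h0 | hpos
  · rw [← h0, mul_zero]; exact norm_nonneg _
  · exact le_of_mul_le_mul_right hsq hpos

lemma norm_le_of_mul_norm_fst_le {l : ℂ} {c : ℝ} (hc : 0 < c) {p : 𝔥 × 𝔥}
    (hp : c * ‖p.1‖ ≤ ‖p.2 - l • p.1‖) : ‖p‖ ≤ ((1 + ‖l‖) / c + 1) * ‖p.2 - l • p.1‖ := by
  set x := ‖p.2 - l • p.1‖
  have hx : 0 ≤ x := norm_nonneg _
  have h1 : ‖p.1‖ ≤ x / c := (le_div_iff₀' hc).mpr hp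
  have h2 : ‖p.2‖ ≤ x + ‖l‖ * (x / c) :=
    calc ‖p.2‖ = ‖(p.2 - l • p.1) + l • p.1‖ := by rw [sub_add_cancel]
      _ ≤ x + ‖l‖ * ‖p.1‖ := (norm_add_le _ _).trans_eq (by rw [norm_smul])
      _ ≤ x + ‖l‖ * (x / c) := by gcongr
  have hK : ((1 + ‖l‖) / c + 1) * x = x / c + (x + ‖l‖ * (x / c)) := by ring
  have : 0 ≤ ‖l‖ * (x / c) := by positivity
  exact norm_prod_le_iff.mpr ⟨by linarith, by linarith [div_nonneg hx hc.le]⟩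

variable [CompleteSpace 𝔥]

theorem exists_resolvent_of_isClosed {S : Submodule ℂ (𝔥 × 𝔥)}
    (hS : IsClosed (S : Set (𝔥 × 𝔥))) {l : ℂ} {c : ℝ} (hc : 0 < c)
    (hest : ∀ p ∈ S, c * ‖p.1‖ ≤ ‖p.2 - l • p.1‖)
    (hker : ∀ h : 𝔥, (h, starRingEnd ℂ l • h) ∈ adjRel S → h = 0) :
    ∃ R : 𝔥 →L[ℂ] 𝔥, (∀ h, (R h, h + l • R h) ∈ S) ∧ ∀ p ∈ S, R (p.2 - l • p.1) = p.1 := by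
  have : CompleteSpace S := hS.completeSpace_coe
  let T : S →L[ℂ] 𝔥 :=
    (ContinuousLinearMap.snd ℂ 𝔥 𝔥 - l • ContinuousLinearMap.fst ℂ 𝔥 𝔥).comp S.subtypeL
  have hT (p : S) : T p = (p : 𝔥 × 𝔥).2 - l • (p : 𝔥 × 𝔥).1 := rfl
  have hanti : AntilipschitzWith ⟨(1 + ‖l‖) / c + 1, by positivity⟩ T :=
    T.antilipschitz_of_bound fun p => norm_le_of_mul_norm_fst_le hc (hest p p.2)
  have hclosed : IsClosed (T.range : Set 𝔥) := by
    rw [LinearMap.coe_range]; exact hanti.isClosed_range T.uniformContinuous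
  have : CompleteSpace T.range := hclosed.completeSpace_coe
  have hrange : T.range = ⊤ := by
    refine Submodule.orthogonal_eq_bot_iff.mp <| (Submodule.eq_bot_iff _).mpr fun h hh => hker h ?_
    intro q hq
    have h0 : ⟪h, q.2 - l • q.1⟫ = 0 :=
      (Submodule.mem_orthogonal' _ _).mp hh _ ⟨⟨q, hq⟩, rfl⟩
    rw [inner_sub_right, inner_smul_right, sub_eq_zero] at h0
    rw [inner_smul_left, Complex.conj_conj, h0]
  let e := ContinuousLinearEquiv.ofBijective T (LinearMap.ker_eq_bot.mpr hanti.injective) hrange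
  refine ⟨(ContinuousLinearMap.fst ℂ 𝔥 𝔥).comp (S.subtypeL.comp (e.symm : 𝔥 →L[ℂ] S)), ?_, ?_⟩
  · intro h
    have hTe : T (e.symm h) = h := e.apply_symm_apply h
    rw [hT, sub_eq_iff_eq_add] at hTe
    convert (e.symm h).2 using 1
    exact Prod.ext rfl hTe.symm
  · intro p hp
    exact congrArg (fun q : S => (q : 𝔥 × 𝔥).1) (e.symm_apply_apply ⟨p, hp⟩)

end LinearRelation

section BoundaryTriplet

variable {𝔥 𝓗₀ : Type*} [NormedAddCommGroup 𝔥] [InnerProductSpace ℂ 𝔥]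
  [NormedAddCommGroup 𝓗₀] [InnerProductSpace ℂ 𝓗₀] {A : Submodule ℂ (𝔥 × 𝔥)}

/-- The relation `A₀ = ker Γ₀` in `𝔥`. -/
def kerRel (Γ₀ : ↥(adjRel A) →ₗ[ℂ] 𝓗₀) : Submodule ℂ (𝔥 × 𝔥) :=
  (LinearMap.ker Γ₀).map (adjRel A).subtype

lemma kerRel_le_adjRel (Γ₀ : ↥(adjRel A) →ₗ[ℂ] 𝓗₀) : kerRel Γ₀ ≤ adjRel A := by
  rintro _ ⟨f, -, rfl⟩
  exact f.2

lemma coe_mem_kerRel_iff {Γ₀ : ↥(adjRel A) →ₗ[ℂ] 𝓗₀} (f : ↥(adjRel A)) :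
    (f : 𝔥 × 𝔥) ∈ kerRel Γ₀ ↔ Γ₀ f = 0 :=
  ⟨fun ⟨_, hg, hgf⟩ => Subtype.ext hgf ▸ hg, fun hf => ⟨f, hf, rfl⟩⟩

variable [CompleteSpace 𝓗₀] {𝓗₁ : Submodule ℂ 𝓗₀}

/-- `{𝓗₀ ⊕ 𝓗₁, Γ₀, Γ₁}` is a boundary triplet for `A*`; `P₂` of the Green identity is the
orthogonal projection onto `𝓗₁ᗮ = 𝓗₀ ⊖ 𝓗₁`. -/
structure IsBoundaryTriplet (Γ₀ : ↥(adjRel A) →ₗ[ℂ] 𝓗₀) (Γ₁ : ↥(adjRel A) →ₗ[ℂ] ↥𝓗₁) :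
    Prop where
  surjective : Function.Surjective fun f : ↥(adjRel A) => (Γ₀ f, Γ₁ f)
  green : ∀ f g : ↥(adjRel A),
    ⟪(g : 𝔥 × 𝔥).1, (f : 𝔥 × 𝔥).2⟫ - ⟪(g : 𝔥 × 𝔥).2, (f : 𝔥 × 𝔥).1⟫ =
      ⟪Γ₀ g, (Γ₁ f : 𝓗₀)⟫ - ⟪(Γ₁ g : 𝓗₀), Γ₀ f⟫ -
        Complex.I * ⟪(𝓗₁ᗮ.orthogonalProjectionOnto (Γ₀ g) : 𝓗₀),
          (𝓗₁ᗮ.orthogonalProjectionOnto (Γ₀ f) : 𝓗₀)⟫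

variable {Γ₀ : ↥(adjRel A) →ₗ[ℂ] 𝓗₀} {Γ₁ : ↥(adjRel A) →ₗ[ℂ] ↥𝓗₁}

lemma mem_adjRel_kerRel_iff (hΓ : IsBoundaryTriplet Γ₀ Γ₁) (f : ↥(adjRel A)) :
    (f : 𝔥 × 𝔥) ∈ adjRel (kerRel Γ₀) ↔ Γ₀ f ∈ 𝓗₁ᗮ := by
  constructor
  · intro hf
    refine (Submodule.mem_orthogonal _ _).mpr fun y hy => ?_
    obtain ⟨g, hg⟩ := hΓ.surjective (0, ⟨y, hy⟩)
    obtain ⟨hg₀ : Γ₀ g = 0, hg₁ : Γ₁ g = ⟨y, hy⟩⟩ := Prod.ext_iff.mp hg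
    have hfg := hf g ((coe_mem_kerRel_iff g).mpr hg₀)
    have := hΓ.green f g
    rw [← inner_conj_symm (g : 𝔥 × 𝔥).1, ← inner_conj_symm (g : 𝔥 × 𝔥).2, hfg, sub_self,
      hg₀, hg₁] at this
    simpa using this.symm
  · rintro hf _ ⟨g, hg₀ : Γ₀ g = 0, rfl⟩
    have := hΓ.green g f
    rw [hg₀, Submodule.inner_left_of_mem_orthogonal (Γ₁ g).2 hf] at this
    simp only [map_zero, Submodule.coe_zero, inner_zero_right, mul_zero, sub_zero] at this
    exact (sub_eq_zero.mp this).symm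

lemma kerRel_le_adjRel_kerRel (hΓ : IsBoundaryTriplet Γ₀ Γ₁) : kerRel Γ₀ ≤ adjRel (kerRel Γ₀) := by
  rintro _ ⟨f, hf, rfl⟩
  exact (mem_adjRel_kerRel_iff hΓ f).mpr (LinearMap.mem_ker.mp hf ▸ Submodule.zero_mem _)

lemma im_inner_of_mem_adjRel_kerRel (hΓ : IsBoundaryTriplet Γ₀ Γ₁) (f : ↥(adjRel A))
    (hf : (f : 𝔥 × 𝔥) ∈ adjRel (kerRel Γ₀)) :
    2 * (⟪(f : 𝔥 × 𝔥).1, (f : 𝔥 × 𝔥).2⟫).im = -‖Γ₀ f‖ ^ 2 := by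
  have hperp := (mem_adjRel_kerRel_iff hΓ f).mp hf
  have := congrArg Complex.im (hΓ.green f f)
  rw [Submodule.orthogonalProjectionOnto_mem_subspace_eq_self ⟨_, hperp⟩,
    Submodule.inner_left_of_mem_orthogonal (Γ₁ f).2 hperp,
    Submodule.inner_right_of_mem_orthogonal (Γ₁ f).2 hperp,
    ← inner_conj_symm (f : 𝔥 × 𝔥).2] at this
  simp only [Complex.sub_im, Complex.conj_im, sub_self, zero_sub, Complex.neg_im, Complex.mul_im,
    Complex.I_re, Complex.I_im, zero_mul, one_mul, zero_add] at this
  rw [← RCLike.re_to_complex, inner_self_eq_norm_sq] at this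
  linarith

lemma coe_mem_kerRel_of_im_inner_eq_zero (hΓ : IsBoundaryTriplet Γ₀ Γ₁) (f : ↥(adjRel A))
    (hf : (f : 𝔥 × 𝔥) ∈ adjRel (kerRel Γ₀))
    (him : (⟪(f : 𝔥 × 𝔥).1, (f : 𝔥 × 𝔥).2⟫).im = 0) : (f : 𝔥 × 𝔥) ∈ kerRel Γ₀ := by
  have := im_inner_of_mem_adjRel_kerRel hΓ f hf
  rw [him, mul_zero, zero_eq_neg, sq_eq_zero_iff, norm_eq_zero] at this
  exact (coe_mem_kerRel_iff f).mpr this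

lemma isClosed_kerRel (hΓ : IsBoundaryTriplet Γ₀ Γ₁) : IsClosed (kerRel Γ₀ : Set (𝔥 × 𝔥)) := by
  have hsymm := kerRel_le_adjRel_kerRel hΓ
  have : (kerRel Γ₀ : Set (𝔥 × 𝔥)) =
      (adjRel A : Set (𝔥 × 𝔥)) ∩ adjRel (kerRel Γ₀) ∩ {p | (⟪p.1, p.2⟫).im = 0} := by
    ext p
    exact ⟨fun hp => ⟨⟨kerRel_le_adjRel Γ₀ hp, hsymm hp⟩, im_inner_eq_zero_of_le_adjRel hsymm hp⟩,
      fun ⟨⟨hpA, hp⟩, him⟩ => coe_mem_kerRel_of_im_inner_eq_zero hΓ ⟨p, hpA⟩ hp him⟩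
  rw [this]
  exact ((isClosed_adjRel A).inter (isClosed_adjRel _)).inter
    (isClosed_eq (Complex.continuous_im.comp (continuous_fst.inner continuous_snd)) continuous_const)

lemma le_kerRel (hΓ : IsBoundaryTriplet Γ₀ Γ₁) (hsym : A ≤ adjRel A) : A ≤ kerRel Γ₀ :=
  fun a ha => coe_mem_kerRel_of_im_inner_eq_zero hΓ ⟨a, hsym ha⟩
    (adjRel_anti (kerRel_le_adjRel Γ₀) (le_adjRel_adjRel A ha))
    (im_inner_eq_zero_of_le_adjRel hsym ha)

lemma eq_zero_of_mem_adjRel_kerRel (hΓ : IsBoundaryTriplet Γ₀ Γ₁) (hsym : A ≤ adjRel A) {l : ℂ}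
    (hl : l.im < 0) {h : 𝔥} (hh : (h, starRingEnd ℂ l • h) ∈ adjRel (kerRel Γ₀)) : h = 0 := by
  let f : ↥(adjRel A) := ⟨_, adjRel_anti (le_kerRel hΓ hsym) hh⟩
  have him := im_inner_of_mem_adjRel_kerRel hΓ f hh
  have hre : (⟪h, h⟫).re = ‖h‖ ^ 2 := by rw [← RCLike.re_to_complex]; exact inner_self_eq_norm_sq h
  rw [inner_smul_right, Complex.mul_im, Complex.conj_re, Complex.conj_im, hre,
    ← RCLike.im_to_complex, inner_self_im, mul_zero, zero_add] at him
  have hsq : ‖h‖ ^ 2 ≤ 0 := by nlinarith [sq_nonneg ‖Γ₀ f‖]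
  exact norm_eq_zero.mp (pow_eq_zero_iff two_ne_zero |>.mp (le_antisymm hsq (sq_nonneg _)))

end BoundaryTriplet

variable {𝔥 𝓗₀ : Type*} [NormedAddCommGroup 𝔥] [InnerProductSpace ℂ 𝔥] [CompleteSpace 𝔥]
  [NormedAddCommGroup 𝓗₀] [InnerProductSpace ℂ 𝓗₀] [CompleteSpace 𝓗₀]

theorem statement7_general
    (A : Submodule ℂ (𝔥 × 𝔥)) (hsym : A ≤ adjRel A)
    (𝓗₁ : Submodule ℂ 𝓗₀)
    (Γ₀ : ↥(adjRel A) →ₗ[ℂ] 𝓗₀) (Γ₁ : ↥(adjRel A) →ₗ[ℂ] ↥𝓗₁)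
    (hsurj : Function.Surjective (fun f : ↥(adjRel A) => (Γ₀ f, Γ₁ f)))
    (hGreen : ∀ f g : ↥(adjRel A),
      ⟪(g : 𝔥 × 𝔥).1, (f : 𝔥 × 𝔥).2⟫ - ⟪(g : 𝔥 × 𝔥).2, (f : 𝔥 × 𝔥).1⟫ =
        ⟪Γ₀ g, (Γ₁ f : 𝓗₀)⟫ - ⟪(Γ₁ g : 𝓗₀), Γ₀ f⟫ -
          Complex.I * ⟪((Submodule.orthogonalProjection (𝓗₁ᗮ) (Γ₀ g) : ↥(𝓗₁ᗮ)) : 𝓗₀),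
            ((Submodule.orthogonalProjection (𝓗₁ᗮ) (Γ₀ f) : ↥(𝓗₁ᗮ)) : 𝓗₀)⟫)
    (A₀ : Submodule ℂ (𝔥 × 𝔥)) (hA₀ : A₀ = Submodule.map (adjRel A).subtype (LinearMap.ker Γ₀)) :
    -- A₀ is a closed symmetric extension of A ...
    A ≤ A₀ ∧ A₀ ≤ adjRel A₀ ∧ IsClosed (A₀ : Set (𝔥 × 𝔥)) ∧
    -- ... and ℂ₋ ⊆ ρ(A₀)
    (∀ l : ℂ, l.im < 0 → ∃ R : 𝔥 →L[ℂ] 𝔥,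
      (∀ h : 𝔥, (R h, h + l • R h) ∈ A₀) ∧ (∀ p ∈ A₀, R (p.2 - l • p.1) = p.1)) := by
  have hΓ : IsBoundaryTriplet Γ₀ Γ₁ := ⟨hsurj, hGreen⟩
  have hsymm := kerRel_le_adjRel_kerRel hΓ
  have hclosed := isClosed_kerRel hΓ
  subst hA₀
  refine ⟨le_kerRel hΓ hsym, hsymm, hclosed, fun l hl => ?_⟩
  exact exists_resolvent_of_isClosed hclosed (abs_pos.mpr hl.ne)
    (fun p hp => abs_im_mul_norm_le_of_le_adjRel hsymm l hp)
    (fun h hh => eq_zero_of_mem_adjRel_kerRel hΓ hsym hl hh)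

theorem statement7
    (A : Submodule ℂ (𝔥 × 𝔥)) (hA : IsClosed (A : Set (𝔥 × 𝔥))) (hsym : A ≤ adjRel A)
    (𝓗₁ : Submodule ℂ 𝓗₀) (hcl : IsClosed (𝓗₁ : Set 𝓗₀))
    (Γ₀ : ↥(adjRel A) →ₗ[ℂ] 𝓗₀) (Γ₁ : ↥(adjRel A) →ₗ[ℂ] ↥𝓗₁)
    (hsurj : Function.Surjective (fun f : ↥(adjRel A) => (Γ₀ f, Γ₁ f)))
    (hGreen : ∀ f g : ↥(adjRel A),
      ⟪(g : 𝔥 × 𝔥).1, (f : 𝔥 × 𝔥).2⟫ - ⟪(g : 𝔥 × 𝔥).2, (f : 𝔥 × 𝔥).1⟫ =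
        ⟪Γ₀ g, (Γ₁ f : 𝓗₀)⟫ - ⟪(Γ₁ g : 𝓗₀), Γ₀ f⟫ -
          Complex.I * ⟪((Submodule.orthogonalProjection (𝓗₁ᗮ) (Γ₀ g) : ↥(𝓗₁ᗮ)) : 𝓗₀),
            ((Submodule.orthogonalProjection (𝓗₁ᗮ) (Γ₀ f) : ↥(𝓗₁ᗮ)) : 𝓗₀)⟫)
    (A₀ : Submodule ℂ (𝔥 × 𝔥)) (hA₀ : A₀ = Submodule.map (adjRel A).subtype (LinearMap.ker Γ₀)) :
    -- A₀ is a closed symmetric extension of A ...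
    A ≤ A₀ ∧ A₀ ≤ adjRel A₀ ∧ IsClosed (A₀ : Set (𝔥 × 𝔥)) ∧
    -- ... and ℂ₋ ⊆ ρ(A₀)
    (∀ l : ℂ, l.im < 0 → ∃ R : 𝔥 →L[ℂ] 𝔥,
      (∀ h : 𝔥, (R h, h + l • R h) ∈ A₀) ∧ (∀ p ∈ A₀, R (p.2 - l • p.1) = p.1)) :=
  statement7_general A hsym 𝓗₁ Γ₀ Γ₁ hsurj hGreen A₀ hA₀
end

section
/- Let Σ_τ : ℝ → [H₀′ ⊕ Ĥ₂] be a nondecreasing operator-valued distribution function of block form Σ_τ(s) = [[Σ₁(s), Σ₂(s)],[Σ₃(s), (s/2π)·I]]. If Σ_τ = Σ_ac + Σ_s is its Lebesgue decomposition into absolutely continuous and singular parts, then Σ_s(s) = [[Σ_{1,s}(s), 0],[0, 0]], where Σ_{1,s} is the singular part of Σ₁; i.e., the singular part of Σ_τ is supported entirely in the (1,1)-block. -/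
/-!
For `v = (0, y)` the scalar function `t ↦ ⟪v, Σ_s(t) v⟫ = t ‖y‖² / 2π - ⟪v, Σ_ac(t) v⟫` is
an indefinite integral, so by the Lebesgue differentiation theorem its derivative is a.e. its
density. That derivative also vanishes a.e. because `Σ_s` is singular, so the function is
identically `0`.
Since `Σ_s` is nondecreasing with `Σ_s(0) = 0`, the operators `Σ_s(t) - Σ_s(r)`, `r ≤ t`, are
positive, and a positive operator `R* R` whose quadratic form vanishes at `v` kills `v`. Hence
`Σ_s(t) v = 0`, and self-adjointness of `Σ_s(t)` removes the second row as well.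
-/

open scoped ComplexInnerProductSpace
open MeasureTheory Set Interval

theorem intervalIntegral_eq_zero_of_ae_hasDerivAt_zero {E : Type*} [NormedAddCommGroup E]
    [NormedSpace ℝ E] [CompleteSpace E] {f : ℝ → E} {a b : ℝ}
    (hf : IntervalIntegrable f volume a b)
    (hderiv : ∀ᵐ x, HasDerivAt (fun x => ∫ t in a..x, f t) 0 x) :
    ∫ t in a..b, f t = 0 := by
  have hf0 : ∀ᵐ x, x ∈ Ι a b → f x = 0 := by
    filter_upwards [hf.ae_hasDerivAt_integral, hderiv] with x hfx hx hxab
    exact (hfx (uIoc_subset_uIcc hxab) a left_mem_uIcc).unique hx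
  rw [intervalIntegral.integral_congr_ae hf0, intervalIntegral.integral_zero]

namespace ContinuousLinearMap

variable {E : Type*} [NormedAddCommGroup E] [InnerProductSpace ℂ E]

theorem isPositive_of_re_inner_nonneg_of_im_inner_eq_zero {T : E →L[ℂ] E}
    (h : ∀ v, 0 ≤ (⟪v, T v⟫).re ∧ (⟪v, T v⟫).im = 0) : T.IsPositive := by
  refine (isPositive_iff_complex T).2 fun v => ?_
  have hreal : ⟪v, T v⟫ = ((⟪v, T v⟫).re : ℂ) := Complex.ext rfl (by simp [(h v).2])
  rw [← inner_conj_symm, hreal]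
  simpa using (h v).1

theorem IsPositive.apply_eq_zero_of_inner_map_self_eq_zero [CompleteSpace E] {T : E →L[ℂ] E}
    (hT : T.IsPositive) {v : E} (hv : ⟪v, T v⟫ = 0) : T v = 0 := by
  obtain ⟨R, rfl⟩ :=
    CStarAlgebra.nonneg_iff_eq_star_mul_self.mp ((nonneg_iff_isPositive T).2 hT)
  have hRv : R v = 0 := by
    rwa [star_eq_adjoint, mul_apply_eq_comp, adjoint_inner_right, inner_self_eq_zero] at hv
  simp [hRv]

end ContinuousLinearMap

section LoewnerMonotone

variable {E : Type*} [NormedAddCommGroup E] [InnerProductSpace ℂ E] [CompleteSpace E]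
  {S : ℝ → E →L[ℂ] E}

theorem Monotone.apply_eq_zero_of_inner_map_self_eq_zero (hS : Monotone S) (hS0 : S 0 = 0) {v : E}
    (hv : ∀ t, ⟪v, S t v⟫ = 0) (t : ℝ) : S t v = 0 := by
  have hconst : ∀ {s t}, s ≤ t → S t v = S s v := fun {s t} hst => by
    have h := ((ContinuousLinearMap.le_def _ _).1 (hS hst)).apply_eq_zero_of_inner_map_self_eq_zero
      (v := v) (by simp [hv])
    rwa [sub_apply, sub_eq_zero] at h
  rcases le_total 0 t with h | h
  · rw [hconst h, hS0, zero_apply]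
  · rw [← hconst h, hS0, zero_apply]

theorem Monotone.isSelfAdjoint_apply (hS : Monotone S) (hS0 : S 0 = 0) (t : ℝ) :
    IsSelfAdjoint (S t) := by
  rcases le_total 0 t with h | h
  · exact (hS0 ▸ hS h : 0 ≤ S t).isSelfAdjoint
  · simpa using (neg_nonneg.2 (hS0 ▸ hS h : S t ≤ 0)).isSelfAdjoint.neg

end LoewnerMonotone

section BlockOperatorFunction

variable {H K : Type*} [NormedAddCommGroup H] [InnerProductSpace ℂ H]
  [NormedAddCommGroup K] [InnerProductSpace ℂ K]
  {Sg : ℝ → WithLp 2 (H × K) →L[ℂ] WithLp 2 (H × K)}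
  {Sg₁ : ℝ → H →L[ℂ] H} {Sg₂ : ℝ → K →L[ℂ] H} {Sg₃ : ℝ → H →L[ℂ] K}

theorem inner_toLp_zero_apply_of_block (hblock : ∀ (s : ℝ) (v : WithLp 2 (H × K)),
      Sg s v = WithLp.toLp 2 (Sg₁ s v.ofLp.1 + Sg₂ s v.ofLp.2,
        Sg₃ s v.ofLp.1 + ((s / (2 * Real.pi)) : ℝ) • v.ofLp.2))
    (s : ℝ) (y : K) :
    ⟪WithLp.toLp 2 ((0, y) : H × K), Sg s (WithLp.toLp 2 ((0, y) : H × K))⟫ =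
      s * (⟪y, y⟫ / (2 * Real.pi)) := by
  rw [hblock, WithLp.prod_inner_apply]
  simp [inner_smul_right_eq_smul, Complex.real_smul]
  ring

theorem inner_toLp_zero_apply_eq_zero_of_block [CompleteSpace H] [CompleteSpace K]
    (hblock : ∀ (s : ℝ) (v : WithLp 2 (H × K)),
      Sg s v = WithLp.toLp 2 (Sg₁ s v.ofLp.1 + Sg₂ s v.ofLp.2,
        Sg₃ s v.ofLp.1 + ((s / (2 * Real.pi)) : ℝ) • v.ofLp.2))
    {A S g : ℝ → WithLp 2 (H × K) →L[ℂ] WithLp 2 (H × K)}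
    (hsplit : ∀ s, Sg s = A s + S s) (hg : ∀ s : ℝ, IntervalIntegrable g volume 0 s)
    (hAint : ∀ s : ℝ, A s = ∫ t in (0 : ℝ)..s, g t)
    (hSsing : ∀ᵐ t, HasDerivAt S 0 t) (s : ℝ) (y : K) :
    ⟪WithLp.toLp 2 ((0, y) : H × K), S s (WithLp.toLp 2 ((0, y) : H × K))⟫ = 0 := by
  set v := WithLp.toLp 2 ((0, y) : H × K)
  let L : (WithLp 2 (H × K) →L[ℂ] WithLp 2 (H × K)) →L[ℂ] ℂ :=
    (innerSL ℂ v).comp (ContinuousLinearMap.apply ℂ _ v)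
  set κ : ℂ := ⟪y, y⟫ / (2 * Real.pi)
  have hLg : ∀ t, IntervalIntegrable (fun u => L (g u)) volume 0 t :=
    fun t => ⟨L.integrable_comp (hg t).1, L.integrable_comp (hg t).2⟩
  have hLS : (fun t => L (S t)) = fun t => ∫ u in (0 : ℝ)..t, (κ - L (g u)) := by
    ext t
    rw [intervalIntegral.integral_sub intervalIntegrable_const (hLg t),
      intervalIntegral.integral_const, L.intervalIntegral_comp_comm (hg t), ← hAint,
      eq_sub_of_add_eq' (hsplit t).symm, map_sub]
    simp [L, v, κ, inner_toLp_zero_apply_of_block hblock]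
  change L (S s) = 0
  rw [congrFun hLS s]
  refine intervalIntegral_eq_zero_of_ae_hasDerivAt_zero (intervalIntegrable_const.sub (hLg s)) ?_
  filter_upwards [hSsing] with t ht
  rw [← hLS]
  simpa [Function.comp_def] using (L.restrictScalars ℝ).hasFDerivAt.comp_hasDerivAt t ht

end BlockOperatorFunction

theorem statement13_general {H K : Type*}
    [NormedAddCommGroup H] [InnerProductSpace ℂ H] [FiniteDimensional ℂ H]
    [NormedAddCommGroup K] [InnerProductSpace ℂ K] [FiniteDimensional ℂ K]
    (Sg : ℝ → WithLp 2 (H × K) →L[ℂ] WithLp 2 (H × K))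
    (Sg₁ : ℝ → H →L[ℂ] H) (Sg₂ : ℝ → K →L[ℂ] H) (Sg₃ : ℝ → H →L[ℂ] K)
    -- block structure, with (2,2)-entry (s/2π)·I
    (hblock : ∀ (s : ℝ) (v : WithLp 2 (H × K)),
      Sg s v = WithLp.toLp 2 (Sg₁ s v.ofLp.1 + Sg₂ s v.ofLp.2, Sg₃ s v.ofLp.1 + ((s / (2 * Real.pi)) : ℝ) • v.ofLp.2))
    -- Lebesgue decomposition Σ_τ = Σ_ac + Σ_s
    (A S : ℝ → WithLp 2 (H × K) →L[ℂ] WithLp 2 (H × K))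
    (hsplit : ∀ s, Sg s = A s + S s) (hS0 : S 0 = 0)
    -- Σ_ac is absolutely continuous: an indefinite integral
    (g : ℝ → WithLp 2 (H × K) →L[ℂ] WithLp 2 (H × K))
    (hg : ∀ s : ℝ, IntervalIntegrable g MeasureTheory.volume 0 s)
    (hAint : ∀ s : ℝ, A s = ∫ t in (0 : ℝ)..s, g t)
    -- Σ_s is nondecreasing and singular (derivative 0 a.e.)
    (hSmono : ∀ s t : ℝ, s ≤ t → ∀ v : WithLp 2 (H × K),
      0 ≤ (⟪v, (S t - S s) v⟫).re ∧ (⟪v, (S t - S s) v⟫).im = 0)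
    (hSsing : ∀ᵐ t ∂MeasureTheory.volume, HasDerivAt S 0 t) :
    -- the singular part has only the (1,1)-block: Σ_s = [[Σ_{1,s}, 0],[0,0]]
    (∀ (s : ℝ) (y : K), S s (WithLp.toLp 2 ((0, y) : H × K)) = 0) ∧
    (∀ (s : ℝ) (v : WithLp 2 (H × K)), (S s v).ofLp.2 = 0) := by
  have hS_monotone : Monotone S := fun s t hst =>
    ContinuousLinearMap.isPositive_of_re_inner_nonneg_of_im_inner_eq_zero (hSmono s t hst)
  have hcol : ∀ s (y : K), S s (WithLp.toLp 2 ((0, y) : H × K)) = 0 := fun s y =>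
    hS_monotone.apply_eq_zero_of_inner_map_self_eq_zero hS0
      (fun t => inner_toLp_zero_apply_eq_zero_of_block hblock hsplit hg hAint hSsing t y) s
  refine ⟨hcol, fun s w => inner_self_eq_zero (𝕜 := ℂ).mp ?_⟩
  have hsymm := (hS_monotone.isSelfAdjoint_apply hS0 s).isSymmetric
    (WithLp.toLp 2 ((0, (S s w).ofLp.2) : H × K)) w
  rw [ContinuousLinearMap.coe_coe, hcol, inner_zero_left, WithLp.prod_inner_apply] at hsymm
  simpa using hsymm.symm

theorem statement13 {H K : Type*}
    [NormedAddCommGroup H] [InnerProductSpace ℂ H] [FiniteDimensional ℂ H]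
    [NormedAddCommGroup K] [InnerProductSpace ℂ K] [FiniteDimensional ℂ K]
    (Sg : ℝ → WithLp 2 (H × K) →L[ℂ] WithLp 2 (H × K))
    (Sg₁ : ℝ → H →L[ℂ] H) (Sg₂ : ℝ → K →L[ℂ] H) (Sg₃ : ℝ → H →L[ℂ] K)
    -- block structure, with (2,2)-entry (s/2π)·I
    (hblock : ∀ (s : ℝ) (v : WithLp 2 (H × K)),
      Sg s v = WithLp.toLp 2 (Sg₁ s v.ofLp.1 + Sg₂ s v.ofLp.2, Sg₃ s v.ofLp.1 + ((s / (2 * Real.pi)) : ℝ) • v.ofLp.2))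
    -- Σ_τ is a nondecreasing (operator-valued) distribution function
    (hmono : ∀ s t : ℝ, s ≤ t → ∀ v : WithLp 2 (H × K),
      0 ≤ (⟪v, (Sg t - Sg s) v⟫).re ∧ (⟪v, (Sg t - Sg s) v⟫).im = 0)
    (hzero : Sg 0 = 0)
    -- Lebesgue decomposition Σ_τ = Σ_ac + Σ_s
    (A S : ℝ → WithLp 2 (H × K) →L[ℂ] WithLp 2 (H × K))
    (hsplit : ∀ s, Sg s = A s + S s) (hA0 : A 0 = 0) (hS0 : S 0 = 0)
    -- Σ_ac is absolutely continuous: an indefinite integral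
    (g : ℝ → WithLp 2 (H × K) →L[ℂ] WithLp 2 (H × K))
    (hg : ∀ s : ℝ, IntervalIntegrable g MeasureTheory.volume 0 s)
    (hAint : ∀ s : ℝ, A s = ∫ t in (0 : ℝ)..s, g t)
    -- Σ_s is nondecreasing and singular (derivative 0 a.e.)
    (hSmono : ∀ s t : ℝ, s ≤ t → ∀ v : WithLp 2 (H × K),
      0 ≤ (⟪v, (S t - S s) v⟫).re ∧ (⟪v, (S t - S s) v⟫).im = 0)
    (hSsing : ∀ᵐ t ∂MeasureTheory.volume, HasDerivAt S 0 t) :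
    -- the singular part has only the (1,1)-block: Σ_s = [[Σ_{1,s}, 0],[0,0]]
    (∀ (s : ℝ) (y : K), S s (WithLp.toLp 2 ((0, y) : H × K)) = 0) ∧
    (∀ (s : ℝ) (v : WithLp 2 (H × K)), (S s v).ofLp.2 = 0) :=
  statement13_general Sg Sg₁ Sg₂ Sg₃ hblock A S hsplit hS0 g hg hAint hSmono hSsing
end

section
/- Let τ₋(λ) ⊆ 𝓗₀ ⊕ 𝓗₁ be a linear relation given by τ₋(λ) = {(h₀,h₁) : D₀(λ)h₀ + D₁(λ)h₁ = 0} with D₀(λ) ∈ [𝓗₀], D₁(λ) ∈ [𝓗₁,𝓗₀], and let Ṁ₋(λ) ∈ [𝓗₀,𝓗₁]. If the relation sum τ₋(λ) + Ṁ₋(λ) := {(h₀, h₁ + Ṁ₋(λ)h₀) : (h₀,h₁) ∈ τ₋(λ)} has a bounded everywhere-defined inverse, then D₀(λ) − D₁(λ)Ṁ₋(λ) is invertible in [𝓗₀] and −(τ₋(λ) + Ṁ₋(λ))⁻¹ = (D₀(λ) − D₁(λ)Ṁ₋(λ))⁻¹ D₁(λ) as operators (identifying the relation inverse with an operator). -/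
/- STATEMENT 19: if the relation `τ₋(λ) + Ṁ₋(λ)` has a bounded everywhere-defined
inverse, then `D₀(λ) − D₁(λ)Ṁ₋(λ)` is invertible and
`−(τ₋(λ) + Ṁ₋(λ))⁻¹ = (D₀(λ) − D₁(λ)Ṁ₋(λ))⁻¹ D₁(λ)`. -/

theorem statement19 {𝓗₀ : Type*} [NormedAddCommGroup 𝓗₀] [InnerProductSpace ℂ 𝓗₀]
    [FiniteDimensional ℂ 𝓗₀] (𝓗₁ : Submodule ℂ 𝓗₀)
    (D₀ : 𝓗₀ →L[ℂ] 𝓗₀) (D₁ : ↥𝓗₁ →L[ℂ] 𝓗₀) (M : 𝓗₀ →L[ℂ] ↥𝓗₁)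
    -- τ₋(λ) = {(h₀,h₁) : D₀(λ)h₀ + D₁(λ)h₁ = 0}
    (τ : Set (𝓗₀ × ↥𝓗₁)) (hτ : τ = {p | D₀ p.1 + D₁ p.2 = 0})
    -- the relation sum τ₋(λ) + Ṁ₋(λ)
    (τM : Set (𝓗₀ × ↥𝓗₁)) (hτM : τM = {p | ∃ q ∈ τ, p.1 = q.1 ∧ p.2 = q.2 + M q.1})
    -- (τ₋(λ) + Ṁ₋(λ))⁻¹ is (the graph of) a bounded everywhere-defined operator S
    (S : ↥𝓗₁ →L[ℂ] 𝓗₀) (hS : ∀ (k : ↥𝓗₁) (h₀ : 𝓗₀), (h₀, k) ∈ τM ↔ h₀ = S k) :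
    ∃ E : 𝓗₀ →L[ℂ] 𝓗₀,
      (D₀ - D₁.comp M).comp E = 1 ∧ E.comp (D₀ - D₁.comp M) = 1 ∧
      ∀ k : ↥𝓗₁, -(S k) = E (D₁ k) := by
  set T : 𝓗₀ →L[ℂ] 𝓗₀ := D₀ - D₁.comp M with hT
  -- Key: T h₀ = -D₁ k ↔ h₀ = S k
  have key : ∀ (k : ↥𝓗₁) (h₀ : 𝓗₀), T h₀ = -D₁ k ↔ h₀ = S k := by
    intro k h₀
    rw [← hS k h₀, hτM, hτ]
    constructor
    · intro h
      refine ⟨(h₀, k - M h₀), ?_, rfl, by simp⟩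
      show D₀ h₀ + D₁ (k - M h₀) = 0
      rw [hT] at h
      simp only [ContinuousLinearMap.sub_apply, ContinuousLinearMap.comp_apply] at h
      rw [eq_neg_iff_add_eq_zero] at h
      rw [map_sub]
      abel_nf at h ⊢
      exact h
    · rintro ⟨q, hq, h1, h2⟩
      have hq' : D₀ q.1 + D₁ q.2 = 0 := hq
      have hq'' : D₀ q.1 = -D₁ q.2 := by rw [eq_neg_iff_add_eq_zero]; exact hq'
      subst h1
      have h2' : k = q.2 + M q.1 := h2
      rw [hT]
      simp only [ContinuousLinearMap.sub_apply, ContinuousLinearMap.comp_apply, h2', map_add,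
        hq'']
      abel
  -- S 0 = 0 by key (taking h₀ = 0)
  have hS0 : S 0 = 0 := by
    have := (key 0 0).1 (by simp)
    exact this.symm
  -- T is injective
  have hinj : Function.Injective T := by
    rw [← T.coe_coe]
    rw [injective_iff_map_eq_zero]
    intro a ha
    have : T a = -D₁ 0 := by simpa using ha
    rw [(key 0 a).1 this, hS0]
  -- invert T using finite dimensionality
  have hinjL : Function.Injective (T : 𝓗₀ →ₗ[ℂ] 𝓗₀) := hinj
  let e : 𝓗₀ ≃ₗ[ℂ] 𝓗₀ := LinearEquiv.ofInjectiveEndo _ hinjL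
  let E : 𝓗₀ →L[ℂ] 𝓗₀ := LinearMap.toContinuousLinearMap (e.symm : 𝓗₀ →ₗ[ℂ] 𝓗₀)
  have hE : ∀ x, E (T x) = x := fun x => e.symm_apply_apply x
  have hE' : ∀ x, T (E x) = x := fun x => e.apply_symm_apply x
  refine ⟨E, ?_, ?_, ?_⟩
  · ext x; simpa using hE' x
  · ext x; simpa using hE x
  · intro k
    have h1 : T (S k) = -D₁ k := (key k (S k)).2 rfl
    have := congrArg E h1
    rw [hE] at this
    rw [this, map_neg, neg_neg]
end
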